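/- Let 𝒢 = (V, A) be an ordering relations graph, let ℒ[𝒢] = (H, ⊆), and let i, o ∉ V be two fresh elements. Then the augmented partial order ℒ*[𝒢] = (H*, ⊆), where H* = {∅} ∪ {h ∪ {i} | h ∈ H} ∪ {h ∪ {i,o} | h ∈ H_max} and H_max is the set of maximal elements of (H, ⊆), is a prime algebraic coherent partial order. -/
import Mathlib


open Relation

/-- A subset `W` is conflict-free w.r.t. the arc relation `A`. -/
def ConflictFree {U : Type*} (A : U → U → Prop) (W : Set U) : Prop :=
  ∀ v₁ ∈ W, ∀ v₂ ∈ W, ¬ A v₁ v₂ ∨ ¬ A v₂ v₁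

/-- A subset `W` is left-closed w.r.t. the vertex set `V` and arc relation `A`. -/
def LeftClosed {U : Type*} (V : Set U) (A : U → U → Prop) (W : Set U) : Prop :=
  ∀ v₁ ∈ W, ∀ v₂ ∈ V, A v₂ v₁ → ¬ A v₁ v₂ → v₂ ∈ W

/-- `H` : the left-closed conflict-free subsets of `V`; ordered by inclusion this
is the poset `ℒ[𝒢]`. -/
def OrgH {U : Type*} (V : Set U) (A : U → U → Prop) : Set (Set U) :=
  {W | W ⊆ V ∧ LeftClosed V A W ∧ ConflictFree A W}

/-- `H* = {∅} ∪ {h ∪ {i} | h ∈ H} ∪ {h ∪ {i,o} | h ∈ H_max}` where `H_max` is the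
set of maximal elements of `(H, ⊆)`. -/
def OrgHStar {U : Type*} (V : Set U) (A : U → U → Prop) (i o : U) : Set (Set U) :=
  {∅} ∪ {S | ∃ h ∈ OrgH V A, S = h ∪ {i}} ∪
  {S | ∃ h ∈ OrgH V A, (∀ h' ∈ OrgH V A, h ⊆ h' → h' = h) ∧ S = h ∪ {i, o}}

/-- Two elements of a poset are consistent iff they have a common upper bound. -/
def Consistent {D : Type*} [PartialOrder D] (x y : D) : Prop :=
  ∃ z : D, x ≤ z ∧ y ≤ z

/-- A subset of a poset is pairwise consistent. -/
def PairwiseConsistent {D : Type*} [PartialOrder D] (X : Set D) : Prop :=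
  ∀ x ∈ X, ∀ y ∈ X, Consistent x y

/-- A poset is coherent iff every pairwise consistent subset has a least upper bound. -/
def Coherent (D : Type*) [PartialOrder D] : Prop :=
  ∀ X : Set D, PairwiseConsistent X → ∃ l : D, IsLUB X l

/-- An element `p` is a complete prime iff whenever a subset has a least upper
bound above `p`, then `p` lies below some member of the subset. -/
def CompletePrime {D : Type*} [PartialOrder D] (p : D) : Prop :=
  ∀ (X : Set D) (l : D), IsLUB X l → p ≤ l → ∃ y ∈ X, p ≤ y

/-- A poset is prime algebraic iff its complete primes form a denumerable set and
every element is the least upper bound of the complete primes below it. -/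
def PrimeAlgebraic (D : Type*) [PartialOrder D] : Prop :=
  {p : D | CompletePrime p}.Countable ∧
  ∀ x : D, IsLUB {p : D | CompletePrime p ∧ p ≤ x} x

namespace Stmt7Aux

variable {U : Type*} {V : Set U} {A : U → U → Prop} {i o : U}

lemma mem_star_iff {S : Set U} :
    S ∈ OrgHStar V A i o ↔ S = ∅ ∨ (∃ h ∈ OrgH V A, S = h ∪ {i}) ∨
      ∃ h ∈ OrgH V A, (∀ h' ∈ OrgH V A, h ⊆ h' → h' = h) ∧ S = h ∪ {i, o} := by
  simp only [OrgHStar, Set.mem_union, Set.mem_singleton_iff, Set.mem_setOf_eq, or_assoc]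

lemma empty_mem_OrgH : (∅ : Set U) ∈ OrgH V A :=
  ⟨Set.empty_subset _, fun v₁ h₁ => absurd h₁ (Set.notMem_empty v₁),
   fun v₁ h₁ => absurd h₁ (Set.notMem_empty v₁)⟩

/-- Extract the `OrgH`-part containing a vertex `v ∈ V`. -/
lemma mem_V_part (hi : i ∉ V) (ho : o ∉ V) {S : Set U} {v : U}
    (hS : S ∈ OrgHStar V A i o) (hv : v ∈ S) (hvV : v ∈ V) :
    ∃ h ∈ OrgH V A, v ∈ h ∧ (S = h ∪ {i} ∨ S = h ∪ {i, o}) := by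
  rcases mem_star_iff.mp hS with rfl | ⟨h, hh, rfl⟩ | ⟨h, hh, _, rfl⟩
  · exact absurd hv (Set.notMem_empty v)
  · rcases hv with hv | hv
    · exact ⟨h, hh, hv, Or.inl rfl⟩
    · rw [Set.mem_singleton_iff] at hv; subst hv; exact absurd hvV hi
  · rcases hv with hv | hv
    · exact ⟨h, hh, hv, Or.inr rfl⟩
    · rcases hv with hv | hv
      · subst hv; exact absurd hvV hi
      · rw [Set.mem_singleton_iff] at hv; subst hv; exact absurd hvV ho

lemma o_not_mem_mid (ho : o ∉ V) (hio : i ≠ o) {h : Set U} (hh : h ∈ OrgH V A) :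
    o ∉ h ∪ {i} := by
  rintro (hv | hv)
  · exact ho (hh.1 hv)
  · exact hio (by rw [Set.mem_singleton_iff] at hv; exact hv.symm)

/-- A union of a family of elements of `H*`, any two of which have a common
upper bound in `H*`, is again in `H*`. -/
lemma sUnion_mem (hi : i ∉ V) (ho : o ∉ V) (hio : i ≠ o)
    {X : Set (Set U)} (hX : ∀ S ∈ X, S ∈ OrgHStar V A i o)
    (hpc : ∀ S ∈ X, ∀ T ∈ X, ∃ Z ∈ OrgHStar V A i o, S ⊆ Z ∧ T ⊆ Z) :
    ⋃₀ X ∈ OrgHStar V A i o := by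
  by_cases hou : o ∈ ⋃₀ X
  · obtain ⟨S₀, hS₀X, hoS₀⟩ := hou
    rcases mem_star_iff.mp (hX S₀ hS₀X) with rfl | ⟨h, hh, rfl⟩ | ⟨h₀, hh₀, hmax, rfl⟩
    · exact absurd hoS₀ (Set.notMem_empty o)
    · exact absurd hoS₀ (o_not_mem_mid ho hio hh)
    · have key : ⋃₀ X = h₀ ∪ {i, o} := by
        apply subset_antisymm
        · apply Set.sUnion_subset
          intro S hSX
          obtain ⟨Z, hZ, hS₀Z, hSZ⟩ := hpc _ hS₀X S hSX
          have hoZ : o ∈ Z := hS₀Z (Set.mem_union_right _ (by simp))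
          rcases mem_star_iff.mp hZ with rfl | ⟨h, hh, rfl⟩ | ⟨hZ', hhZ', _, rfl⟩
          · exact absurd hoZ (Set.notMem_empty o)
          · exact absurd hoZ (o_not_mem_mid ho hio hh)
          · have hsub : h₀ ⊆ hZ' := by
              intro v hv
              have := hS₀Z (Set.mem_union_left _ hv)
              rcases this with hv' | hv'
              · exact hv'
              · rcases hv' with hv' | hv'
                · exact absurd (hv' ▸ hh₀.1 hv) hi
                · rw [Set.mem_singleton_iff] at hv'
                  exact absurd (hv' ▸ hh₀.1 hv) ho
            have : hZ' = h₀ := hmax hZ' hhZ' hsub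
            subst this
            exact hSZ
        · exact Set.subset_sUnion_of_mem hS₀X
      rw [key]
      exact mem_star_iff.mpr (Or.inr (Or.inr ⟨h₀, hh₀, hmax, rfl⟩))
  · by_cases hne : ⋃₀ X = ∅
    · rw [hne]; exact mem_star_iff.mpr (Or.inl rfl)
    · obtain ⟨v, S, hSX, hvS⟩ := Set.nonempty_iff_ne_empty.mpr hne
      have hiU : i ∈ ⋃₀ X := by
        rcases mem_star_iff.mp (hX S hSX) with rfl | ⟨h, hh, rfl⟩ | ⟨h, hh, _, rfl⟩
        · exact absurd hvS (Set.notMem_empty v)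
        · exact ⟨_, hSX, Set.mem_union_right _ rfl⟩
        · exact absurd ⟨_, hSX, Set.mem_union_right _ (by simp)⟩ hou
      have hH : ⋃₀ X ∩ V ∈ OrgH V A := by
        refine ⟨Set.inter_subset_right, ?_, ?_⟩
        · rintro v₁ ⟨⟨S, hSX, hv₁S⟩, hv₁V⟩ v₂ hv₂V hA21 hn12
          obtain ⟨h, hh, hv₁h, hform⟩ := mem_V_part hi ho (hX S hSX) hv₁S hv₁V
          have hv₂h : v₂ ∈ h := hh.2.1 v₁ hv₁h v₂ hv₂V hA21 hn12
          have : v₂ ∈ S := by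
            rcases hform with rfl | rfl
            · exact Set.mem_union_left _ hv₂h
            · exact Set.mem_union_left _ hv₂h
          exact ⟨⟨S, hSX, this⟩, hv₂V⟩
        · rintro v₁ ⟨⟨S, hSX, hv₁S⟩, hv₁V⟩ v₂ ⟨⟨T, hTX, hv₂T⟩, hv₂V⟩
          obtain ⟨Z, hZ, hSZ, hTZ⟩ := hpc S hSX T hTX
          obtain ⟨h, hh, hv₁h, hform⟩ := mem_V_part hi ho hZ (hSZ hv₁S) hv₁V
          have hv₂h : v₂ ∈ h := by
            have hv₂Z := hTZ hv₂T
            rcases hform with rfl | rfl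
            · rcases hv₂Z with hv | hv
              · exact hv
              · rw [Set.mem_singleton_iff] at hv; exact absurd (hv ▸ hv₂V) hi
            · rcases hv₂Z with hv | hv
              · exact hv
              · rcases hv with hv | hv
                · exact absurd (hv ▸ hv₂V) hi
                · rw [Set.mem_singleton_iff] at hv; exact absurd (hv ▸ hv₂V) ho
          exact hh.2.2 v₁ hv₁h v₂ hv₂h
      have key : ⋃₀ X = (⋃₀ X ∩ V) ∪ {i} := by
        ext w
        constructor
        · rintro hw
          obtain ⟨S, hSX, hwS⟩ := hw
          rcases mem_star_iff.mp (hX S hSX) with rfl | ⟨h, hh, rfl⟩ | ⟨h, hh, _, rfl⟩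
          · exact absurd hwS (Set.notMem_empty w)
          · rcases hwS with hw' | hw'
            · exact Set.mem_union_left _ ⟨⟨_, hSX, Set.mem_union_left _ hw'⟩, hh.1 hw'⟩
            · exact Set.mem_union_right _ hw'
          · exact absurd ⟨_, hSX, Set.mem_union_right _ (by simp)⟩ hou
        · rintro (hw | hw)
          · exact hw.1
          · rw [Set.mem_singleton_iff] at hw; exact hw ▸ hiU
      rw [key]
      exact mem_star_iff.mpr (Or.inr (Or.inl ⟨_, hH, rfl⟩))

/-- If an LUB exists in `H*`, it is the union. -/
lemma lub_eq (hi : i ∉ V) (ho : o ∉ V) (hio : i ≠ o)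
    {X : Set ↥(OrgHStar V A i o)} {l : ↥(OrgHStar V A i o)} (hl : IsLUB X l) :
    (l : Set U) = ⋃₀ (Subtype.val '' X) := by
  have hmem : ⋃₀ (Subtype.val '' X) ∈ OrgHStar V A i o := by
    apply sUnion_mem hi ho hio
    · rintro S ⟨y, _, rfl⟩; exact y.2
    · rintro S ⟨y, hy, rfl⟩ T ⟨z, hz, rfl⟩
      exact ⟨l, l.2, hl.1 hy, hl.1 hz⟩
  have h1 : ⋃₀ (Subtype.val '' X) ⊆ (l : Set U) := by
    apply Set.sUnion_subset
    rintro S ⟨y, hy, rfl⟩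
    exact hl.1 hy
  have h2 : l ≤ ⟨_, hmem⟩ := hl.2 (fun y hy => Set.subset_sUnion_of_mem ⟨y, hy, rfl⟩)
  exact subset_antisymm h2 h1

/-- "Pointed" elements of `H*` are complete primes. -/
lemma pointed_prime (hi : i ∉ V) (ho : o ∉ V) (hio : i ≠ o)
    {S : Set U} (hS : S ∈ OrgHStar V A i o) {e : U} (he : e ∈ S)
    (hpt : ∀ T ∈ OrgHStar V A i o, e ∈ T → S ⊆ T) :
    CompletePrime (⟨S, hS⟩ : ↥(OrgHStar V A i o)) := by
  intro X l hlub hpl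
  have heL : e ∈ (l : Set U) := hpl he
  rw [lub_eq hi ho hio hlub] at heL
  obtain ⟨T, ⟨y, hyX, rfl⟩, heT⟩ := heL
  exact ⟨y, hyX, hpt _ y.2 heT⟩

/-- Top-layer elements of `H*` are complete primes. -/
lemma top_prime (hi : i ∉ V) (ho : o ∉ V) (hio : i ≠ o)
    {h : Set U} (hh : h ∈ OrgH V A) (hmax : ∀ h' ∈ OrgH V A, h ⊆ h' → h' = h)
    (hS : h ∪ {i, o} ∈ OrgHStar V A i o) :
    CompletePrime (⟨h ∪ {i, o}, hS⟩ : ↥(OrgHStar V A i o)) := by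
  intro X l hlub hpl
  have hoS : o ∈ (h ∪ {i, o} : Set U) := Set.mem_union_right _ (by simp)
  have hoL : o ∈ (l : Set U) := hpl hoS
  have hsubV : ∀ {g g' : Set U}, g ⊆ V → g ⊆ g' ∪ {i, o} → g ⊆ g' := by
    intro g g' hgV hgs v hv
    rcases hgs hv with hv' | hv'
    · exact hv'
    · rcases hv' with hv' | hv'
      · exact absurd (hv' ▸ hgV hv) hi
      · rw [Set.mem_singleton_iff] at hv'; exact absurd (hv' ▸ hgV hv) ho
  have hlel : (h ∪ {i, o} : Set U) ⊆ (l : Set U) := hpl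
  have hleq : (l : Set U) = h ∪ {i, o} := by
    rcases mem_star_iff.mp l.2 with hl0 | ⟨g, hg, hlg⟩ | ⟨g, hg, hgmax, hlg⟩
    · exact absurd (hl0 ▸ hoL) (Set.notMem_empty o)
    · exact absurd (hlg ▸ hoL) (o_not_mem_mid ho hio hg)
    · have : h ⊆ g := hsubV hh.1 (hlg ▸ (Set.subset_union_left.trans hlel))
      have hge : g = h := hmax g hg this
      rw [hlg, hge]
  have hoU : o ∈ ⋃₀ (Subtype.val '' X) := by
    rw [← lub_eq hi ho hio hlub]; exact hoL
  obtain ⟨T, ⟨y, hyX, rfl⟩, hoT⟩ := hoU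
  refine ⟨y, hyX, ?_⟩
  rcases mem_star_iff.mp y.2 with hy0 | ⟨g, hg, hyg⟩ | ⟨g, hg, hgmax, hyg⟩
  · exact absurd (hy0 ▸ hoT) (Set.notMem_empty o)
  · exact absurd (hyg ▸ hoT) (o_not_mem_mid ho hio hg)
  · have hysub : (y : Set U) ⊆ h ∪ {i, o} := hleq ▸ hlub.1 hyX
    have : g ⊆ h := hsubV hg.1 (Set.subset_union_left.trans (hyg ▸ hysub))
    have hge : h = g := hgmax h hh this
    show (h ∪ {i, o} : Set U) ⊆ (y : Set U)
    rw [hyg, hge]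

/-- The set of (reflexive-transitive) strict predecessors of `e`. -/
def OrgCl (A : U → U → Prop) (e : U) : Set U :=
  {w | ReflTransGen (fun a b => A a b ∧ ¬ A b a) w e}

lemma mem_cl_self (A : U → U → Prop) (e : U) : e ∈ OrgCl A e := ReflTransGen.refl

lemma cl_subset (hA : ∀ x y, A x y → x ∈ V ∧ y ∈ V) {T : Set U} {e : U}
    (hT : LeftClosed V A T) (he : e ∈ T) : OrgCl A e ⊆ T := by
  intro w hw
  induction hw using ReflTransGen.head_induction_on with
  | refl => exact he
  | head hab _ ih => exact hT _ ih _ (hA _ _ hab.1).1 hab.1 hab.2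

lemma cl_leftClosed (e : U) : LeftClosed V A (OrgCl A e) := by
  intro v₁ h₁ v₂ _ hA21 hn12
  exact ReflTransGen.head ⟨hA21, hn12⟩ h₁

lemma cl_mem_OrgH (hA : ∀ x y, A x y → x ∈ V ∧ y ∈ V) {h : Set U} {e : U}
    (hh : h ∈ OrgH V A) (he : e ∈ h) : OrgCl A e ∈ OrgH V A := by
  have hsub : OrgCl A e ⊆ h := cl_subset hA hh.2.1 he
  exact ⟨hsub.trans hh.1, cl_leftClosed e,
    fun v₁ h₁ v₂ h₂ => hh.2.2 v₁ (hsub h₁) v₂ (hsub h₂)⟩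

end Stmt7Aux

/-- For fresh elements `i, o ∉ V`, the augmented partial order
`ℒ*[𝒢] = (H*, ⊆)` is a prime algebraic coherent partial order. -/
theorem stmt7 {U : Type*} (V : Set U) (hV : V.Finite) (A : U → U → Prop)
    (hA : ∀ x y, A x y → x ∈ V ∧ y ∈ V)
    (i o : U) (hi : i ∉ V) (ho : o ∉ V) (hio : i ≠ o) :
    Coherent ↥(OrgHStar V A i o) ∧ PrimeAlgebraic ↥(OrgHStar V A i o) := by
  constructor
  · -- Coherent
    intro X hpc
    have hmem : ⋃₀ (Subtype.val '' X) ∈ OrgHStar V A i o := by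
      apply Stmt7Aux.sUnion_mem hi ho hio
      · rintro S ⟨y, _, rfl⟩; exact y.2
      · rintro S ⟨y, hy, rfl⟩ T ⟨z, hz, rfl⟩
        obtain ⟨w, hw1, hw2⟩ := hpc y hy z hz
        exact ⟨w, w.2, hw1, hw2⟩
    refine ⟨⟨_, hmem⟩, ?_, ?_⟩
    · intro y hy
      exact Set.subset_sUnion_of_mem ⟨y, hy, rfl⟩
    · intro z hz
      show ⋃₀ (Subtype.val '' X) ⊆ (z : Set U)
      apply Set.sUnion_subset
      rintro S ⟨y, hy, rfl⟩
      exact hz hy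
  · constructor
    · -- countability of the complete primes
      have hfin : (OrgHStar V A i o).Finite := by
        have hfin2 : ({T | T ⊆ V ∪ {i, o}} : Set (Set U)).Finite :=
          Set.Finite.finite_subsets (hV.union ((Set.finite_singleton o).insert i))
        apply hfin2.subset
        intro S hS
        rcases Stmt7Aux.mem_star_iff.mp hS with rfl | ⟨h, hh, rfl⟩ | ⟨h, hh, _, rfl⟩
        · exact Set.empty_subset _
        · refine Set.union_subset (hh.1.trans Set.subset_union_left) ?_
          intro v hv
          rw [Set.mem_singleton_iff] at hv
          exact Set.mem_union_right _ (by simp [hv])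
        · exact Set.union_subset (hh.1.trans Set.subset_union_left) Set.subset_union_right
      have := hfin.to_subtype
      exact Set.to_countable _
    · -- every element is the LUB of the complete primes below it
      rintro ⟨S, hSmem⟩
      constructor
      · rintro p ⟨_, hpx⟩
        exact hpx
      · intro z hz
        rcases Stmt7Aux.mem_star_iff.mp hSmem with hS0 | ⟨h, hh, hSe⟩ | ⟨h, hh, hmax, hSe⟩
        · show S ⊆ (z : Set U)
          rw [hS0]
          exact Set.empty_subset _
        · show S ⊆ (z : Set U)
          intro e he
          rw [hSe] at he
          rcases he with he | he
          · -- e ∈ h : use the prime [e] ∪ {i}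
            have hcl := Stmt7Aux.cl_mem_OrgH hA hh he
            have hmemp : Stmt7Aux.OrgCl A e ∪ {i} ∈ OrgHStar V A i o :=
              Stmt7Aux.mem_star_iff.mpr (Or.inr (Or.inl ⟨_, hcl, rfl⟩))
            have hprime : CompletePrime (⟨_, hmemp⟩ : ↥(OrgHStar V A i o)) := by
              apply Stmt7Aux.pointed_prime hi ho hio hmemp
                (Set.mem_union_left _ (Stmt7Aux.mem_cl_self A e))
              intro T hT heT
              obtain ⟨g, hg, heg, hform⟩ :=
                Stmt7Aux.mem_V_part hi ho hT heT (hh.1 he)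
              have hclg : Stmt7Aux.OrgCl A e ⊆ g := Stmt7Aux.cl_subset hA hg.2.1 heg
              rcases hform with rfl | rfl
              · exact Set.union_subset (hclg.trans Set.subset_union_left)
                  Set.subset_union_right
              · refine Set.union_subset (hclg.trans Set.subset_union_left) ?_
                intro v hv
                rw [Set.mem_singleton_iff] at hv
                exact Set.mem_union_right _ (by simp [hv])
            have hple : (⟨_, hmemp⟩ : ↥(OrgHStar V A i o)) ≤ ⟨S, hSmem⟩ := by
              show (Stmt7Aux.OrgCl A e ∪ {i} : Set U) ⊆ S
              rw [hSe]
              exact Set.union_subset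
                ((Stmt7Aux.cl_subset hA hh.2.1 he).trans Set.subset_union_left)
                Set.subset_union_right
            have hlez := hz ⟨hprime, hple⟩
            exact hlez (Set.mem_union_left _ (Stmt7Aux.mem_cl_self A e))
          · -- e = i : use the prime {i}
            rw [Set.mem_singleton_iff] at he
            have hmemp : (∅ : Set U) ∪ {i} ∈ OrgHStar V A i o :=
              Stmt7Aux.mem_star_iff.mpr (Or.inr (Or.inl ⟨_, Stmt7Aux.empty_mem_OrgH, rfl⟩))
            have hprime : CompletePrime (⟨_, hmemp⟩ : ↥(OrgHStar V A i o)) := by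
              apply Stmt7Aux.pointed_prime hi ho hio hmemp
                (Set.mem_union_right _ rfl)
              intro T hT heT
              exact Set.union_subset (Set.empty_subset _)
                (Set.singleton_subset_iff.mpr heT)
            have hple : (⟨_, hmemp⟩ : ↥(OrgHStar V A i o)) ≤ ⟨S, hSmem⟩ := by
              show ((∅ : Set U) ∪ {i} : Set U) ⊆ S
              rw [hSe]
              exact Set.union_subset (Set.empty_subset _) Set.subset_union_right
            have hlez := hz ⟨hprime, hple⟩
            rw [he]
            exact hlez (Set.mem_union_right _ rfl)
        · -- top layer : S itself is a complete prime
          subst hSe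
          exact hz ⟨Stmt7Aux.top_prime hi ho hio hh hmax hSmem, le_refl _⟩
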